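/- arXiv:1607.04679 — 3 statements merged into one kernel-verified Lean document; each statement's English description precedes it below -/
import Mathlib

section
/- Let X be a metric space, x₀ ∈ X, and define the tent functions f_n(x) = max(0, 1 − 2^n · d(x₀, x)). Let μ be a Borel probability measure on X such that ∫ f_n dμ < 2^{-n} for infinitely many n. Then the function t(x) = Σ_{n∈ℕ} (2^{-n} / max(2^{-n}, ∫ f_n dμ)) · f_n(x) satisfies t(x₀) = ∞, while ∫ t dμ ≤ 2. -/
/-!
Write `c n = 2⁻ⁿ / max(2⁻ⁿ, ∫ f_n dμ)`. Since `f_n(x₀) = 1`, the `n`-th term of `t x₀` is `c n`,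
which equals `1` whenever `∫ f_n dμ < 2⁻ⁿ`; this happens infinitely often, so `t x₀ = ∞`.
On the other hand `∫ t dμ = ∑ c n ∫ f_n dμ` by monotone convergence, and `c n ∫ f_n dμ ≤ 2⁻ⁿ`,
so `∫ t dμ ≤ ∑ 2⁻ⁿ = 2`.
-/

open MeasureTheory ENNReal Filter

theorem ENNReal.div_max_mul_le (a b : ℝ≥0∞) : a / max a b * b ≤ a := by
  rcases eq_or_ne (max a b) ∞ with hm | hm
  · simp [hm]
  rcases eq_or_ne (max a b) 0 with hz | hz
  · simp [(max_eq_bot.mp hz).1]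
  calc a / max a b * b ≤ a / max a b * max a b := by gcongr; exact le_max_right a b
    _ = a := ENNReal.div_mul_cancel hz hm

theorem ENNReal.tsum_eq_top_of_frequently_le {a : ℕ → ℝ≥0∞} {ε : ℝ≥0∞} (hε : ε ≠ 0)
    (h : ∃ᶠ n in atTop, ε ≤ a n) : ∑' n, a n = ∞ := by
  by_contra hne
  exact Nat.frequently_atTop_iff_infinite.mp h (ENNReal.finite_const_le_of_tsum_ne_top hne hε)

theorem lintegral_tsum_div_max_mul_le {α : Type*} [MeasurableSpace α] {μ : Measure α}
    {f : ℕ → α → ℝ≥0∞} (hf : ∀ n, Measurable (f n)) (a : ℕ → ℝ≥0∞) :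
    ∫⁻ x, ∑' n, a n / max (a n) (∫⁻ y, f n y ∂μ) * f n x ∂μ ≤ ∑' n, a n := by
  rw [lintegral_tsum fun n => ((hf n).const_mul _).aemeasurable]
  refine ENNReal.tsum_le_tsum fun n => ?_
  rw [lintegral_const_mul _ (hf n)]
  exact ENNReal.div_max_mul_le _ _

theorem stmt_6_general {X : Type*} [MetricSpace X] [MeasurableSpace X] [BorelSpace X]
    (x₀ : X) (μ : Measure X)
    (f : ℕ → X → ℝ≥0∞)
    (hf : ∀ n x, f n x = ENNReal.ofReal (max 0 (1 - 2 ^ n * dist x₀ x)))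
    (hμ : ∃ᶠ n in atTop, ∫⁻ y, f n y ∂μ < (2 : ℝ≥0∞)⁻¹ ^ n)
    (t : X → ℝ≥0∞)
    (ht : ∀ x, t x = ∑' n : ℕ,
      ((2 : ℝ≥0∞)⁻¹ ^ n / max ((2 : ℝ≥0∞)⁻¹ ^ n) (∫⁻ y, f n y ∂μ)) * f n x) :
    t x₀ = ∞ ∧ ∫⁻ x, t x ∂μ ≤ 2 := by
  have hf_meas (n : ℕ) : Measurable (f n) := by
    rw [funext (hf n)]
    fun_prop
  constructor
  · rw [ht]
    refine ENNReal.tsum_eq_top_of_frequently_le one_ne_zero (hμ.mono fun n hn => ?_)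
    have hpow : (2 : ℝ≥0∞)⁻¹ ^ n ≠ 0 := pow_ne_zero _ (ENNReal.inv_ne_zero.mpr ofNat_ne_top)
    rw [max_eq_left hn.le, ENNReal.div_self hpow (pow_ne_top (inv_ne_top.mpr two_ne_zero)), hf]
    simp
  · calc ∫⁻ x, t x ∂μ ≤ ∑' n : ℕ, (2 : ℝ≥0∞)⁻¹ ^ n :=
          (lintegral_congr ht).trans_le (lintegral_tsum_div_max_mul_le hf_meas _)
      _ = 2 := by rw [ENNReal.tsum_geometric, ENNReal.one_sub_inv_two, inv_inv]

/-- the tent-function test diverges at `x₀` for a (weakly) generic-like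
measure, while its integral stays bounded by 2. -/
theorem stmt_6 {X : Type*} [MetricSpace X] [MeasurableSpace X] [BorelSpace X]
    (x₀ : X) (μ : Measure X) [IsProbabilityMeasure μ]
    (f : ℕ → X → ℝ≥0∞)
    (hf : ∀ n x, f n x = ENNReal.ofReal (max 0 (1 - 2 ^ n * dist x₀ x)))
    (hμ : ∃ᶠ n in atTop, ∫⁻ y, f n y ∂μ < (2 : ℝ≥0∞)⁻¹ ^ n)
    (t : X → ℝ≥0∞)
    (ht : ∀ x, t x = ∑' n : ℕ,
      ((2 : ℝ≥0∞)⁻¹ ^ n / max ((2 : ℝ≥0∞)⁻¹ ^ n) (∫⁻ y, f n y ∂μ)) * f n x) :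
    t x₀ = ∞ ∧ ∫⁻ x, t x ∂μ ≤ 2 :=
  stmt_6_general x₀ μ f hf hμ t ht
end

section
/- Let ν be a probability measure on Y and let (f_r)_{r∈[0,∞)} be a family of nonnegative measurable functions, nondecreasing in r, with r ↦ ∫ f_r dν continuous and nondecreasing, f_0 = 0, and let s = sup_r f_r. Suppose 0 ≤ h ≤ ∫ s dν (with h finite). Define ŝ = sup{ f_r : r ∈ [0,∞), ∫ f_r dν ≤ h }. Then ∫ ŝ dν = h, and if moreover h = ∫ s dν < ∞ then ŝ = s pointwise ν-a.e. -/
open MeasureTheory ENNReal Set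

/-! Monotone convergence passes to suprema over an arbitrary set of reals, since every such set
has a countable cofinal subset. Hence `∫ ŝ = ⨆ {∫ f_r | ∫ f_r ≤ h} ≤ h`. Conversely, unless
`h = ∫ s` (and then every `r` is admissible, so `ŝ = s`), some `∫ f_r` exceeds `h`, and the
intermediate value theorem gives an admissible `r` with `∫ f_r = h`. -/

theorem Real.exists_countable_subset_forall_le (A : Set ℝ) :
    ∃ T ⊆ A, T.Countable ∧ ∀ a ∈ A, ∃ t ∈ T, a ≤ t := by
  set Q := {q : ℚ // (A ∩ Ioi (q : ℝ)).Nonempty}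
  refine ⟨range (fun q : Q => q.2.some) ∪ {a | IsGreatest A a}, ?_, ?_, ?_⟩
  · rintro _ (⟨q, rfl⟩ | ha)
    exacts [q.2.some_mem.1, ha.1]
  · exact (countable_range _).union
      (Set.Subsingleton.countable fun _ ha _ hb => IsGreatest.unique ha hb)
  · intro a ha
    by_cases hmax : IsGreatest A a
    · exact ⟨a, Or.inr hmax, le_rfl⟩
    · -- A rational strictly between `a` and a larger point of `A` has a witness above `a`.
      obtain ⟨b, hb, hab⟩ : ∃ b ∈ A, a < b := by
        simpa [IsGreatest, upperBounds, ha] using hmax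
      obtain ⟨q, haq, hqb⟩ := exists_rat_btwn hab
      let q' : Q := ⟨q, b, hb, hqb⟩
      exact ⟨q'.2.some, Or.inl ⟨q', rfl⟩, haq.le.trans q'.2.some_mem.2.le⟩

theorem MonotoneOn.iSup_subtype_eq_of_forall_le {β α : Type*} [Preorder β] [CompleteLattice α]
    {g : β → α} {A T : Set β} (hg : MonotoneOn g A) (hTA : T ⊆ A)
    (hcofinal : ∀ a ∈ A, ∃ t ∈ T, a ≤ t) :
    ⨆ r : A, g r = ⨆ t : T, g t :=
  le_antisymm
    (iSup_le fun r => by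
      obtain ⟨t, ht, hrt⟩ := hcofinal r r.2
      exact le_iSup_of_le ⟨t, ht⟩ (hg r.2 (hTA ht) hrt))
    (iSup_le fun t => le_iSup_of_le ⟨t, hTA t.2⟩ le_rfl)

theorem lintegral_iSup_of_monotoneOn {Y : Type*} [MeasurableSpace Y] {μ : Measure Y}
    {f : ℝ → Y → ℝ≥0∞} {A : Set ℝ} (hf : ∀ r ∈ A, Measurable (f r))
    (hmono : ∀ y, MonotoneOn (fun r => f r y) A) :
    ∫⁻ y, ⨆ r : A, f r y ∂μ = ⨆ r : A, ∫⁻ y, f r y ∂μ := by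
  obtain ⟨T, hTA, hT, hcofinal⟩ := Real.exists_countable_subset_forall_le A
  have : Countable T := hT.to_subtype
  have hT_mono : Monotone fun (t : T) y => f t y := fun t t' htt' y =>
    hmono y (hTA t.2) (hTA t'.2) htt'
  have hI_mono : MonotoneOn (fun r => ∫⁻ y, f r y ∂μ) A := fun r hr r' hr' hrr' =>
    lintegral_mono fun y => hmono y hr hr' hrr'
  simp_rw [(hmono _).iSup_subtype_eq_of_forall_le hTA hcofinal,
    hI_mono.iSup_subtype_eq_of_forall_le hTA hcofinal]
  exact lintegral_iSup_directed_of_measurable (f := fun (t : T) y => f t y)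
    (fun t => hf t (hTA t.2)) hT_mono.directed_le

theorem stmt_7_general {Y : Type*} [MeasurableSpace Y] (ν : Measure Y)
    (f : ℝ → Y → ℝ≥0∞)
    (hf_meas : ∀ r, Measurable (f r))
    (hf_mono : ∀ y, MonotoneOn (fun r => f r y) (Ici 0))
    (hf_zero : ∀ y, f 0 y = 0)
    (hI_cont : ContinuousOn (fun r => ∫⁻ y, f r y ∂ν) (Ici 0))
    (s : Y → ℝ≥0∞) (hs : ∀ y, s y = ⨆ r : {r : ℝ // 0 ≤ r}, f r.1 y)
    (h : ℝ≥0∞) (h_le : h ≤ ∫⁻ y, s y ∂ν)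
    (sHat : Y → ℝ≥0∞)
    (hsHat : ∀ y, sHat y = ⨆ r : {r : ℝ // 0 ≤ r ∧ ∫⁻ z, f r z ∂ν ≤ h}, f r.1 y) :
    (∫⁻ y, sHat y ∂ν = h) ∧
    (h = ∫⁻ y, s y ∂ν → sHat =ᵐ[ν] s) := by
  set I := fun r => ∫⁻ y, f r y ∂ν with hI
  set A := {r : ℝ | 0 ≤ r ∧ I r ≤ h}
  have hA_mono : ∀ y, MonotoneOn (fun r => f r y) A := fun y =>
    (hf_mono y).mono fun _ hr => hr.1
  have hs_int : ∫⁻ y, s y ∂ν = ⨆ r : Ici (0 : ℝ), I r := by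
    rw [funext hs]
    exact lintegral_iSup_of_monotoneOn (fun r _ => hf_meas r) hf_mono
  have hsHat_int : ∫⁻ y, sHat y ∂ν = ⨆ r : A, I r := by
    rw [funext hsHat]
    exact lintegral_iSup_of_monotoneOn (fun r _ => hf_meas r) hA_mono
  have hsHat_eq : h = ∫⁻ y, s y ∂ν → sHat = s := fun h_eq => by
    funext y
    rw [hsHat, hs]
    refine ((hf_mono y).iSup_subtype_eq_of_forall_le (T := A) (fun _ hr => hr.1) ?_).symm
    exact fun r hr => ⟨r, ⟨hr, h_eq ▸ hs_int ▸ le_iSup_of_le ⟨r, hr⟩ le_rfl⟩, le_rfl⟩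
  refine ⟨le_antisymm (hsHat_int ▸ iSup_le fun r => r.2.2) ?_,
    fun h_eq => .of_eq (hsHat_eq h_eq)⟩
  rcases h_le.eq_or_lt with h_eq | h_lt
  · rw [hsHat_eq h_eq, h_eq]
  obtain ⟨r, hr⟩ := lt_iSup_iff.1 (hs_int ▸ h_lt)
  have hI0 : I 0 = 0 := by simp [hI, hf_zero]
  obtain ⟨c, ⟨hc0, -⟩, hc⟩ := intermediate_value_Icc r.2 (hI_cont.mono Icc_subset_Ici_self)
    ⟨hI0 ▸ zero_le, hr.le⟩
  exact hsHat_int ▸ le_iSup_of_le ⟨c, hc0, hc.le⟩ hc.ge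

/-- cutting off the enumeration of a test at a prescribed integral value. -/
theorem stmt_7 {Y : Type*} [MeasurableSpace Y] (ν : Measure Y) [IsProbabilityMeasure ν]
    (f : ℝ → Y → ℝ≥0∞)
    (hf_meas : ∀ r, Measurable (f r))
    (hf_mono : ∀ y, MonotoneOn (fun r => f r y) (Ici 0))
    (hf_zero : ∀ y, f 0 y = 0)
    (hI_cont : ContinuousOn (fun r => ∫⁻ y, f r y ∂ν) (Ici 0))
    (hI_mono : MonotoneOn (fun r => ∫⁻ y, f r y ∂ν) (Ici 0))
    (s : Y → ℝ≥0∞) (hs : ∀ y, s y = ⨆ r : {r : ℝ // 0 ≤ r}, f r.1 y)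
    (h : ℝ≥0∞) (h_fin : h < ∞) (h_le : h ≤ ∫⁻ y, s y ∂ν)
    (sHat : Y → ℝ≥0∞)
    (hsHat : ∀ y, sHat y = ⨆ r : {r : ℝ // 0 ≤ r ∧ ∫⁻ z, f r z ∂ν ≤ h}, f r.1 y) :
    (∫⁻ y, sHat y ∂ν = h) ∧
    (h = ∫⁻ y, s y ∂ν → sHat =ᵐ[ν] s) :=
  stmt_7_general ν f hf_meas hf_mono hf_zero hI_cont s hs h h_le sHat hsHat
end

section
/- Let U be a subset of P([0,1]) × [0,1] such that each section U_μ = {x : (μ,x) ∈ U} is open in [0,1], the set U is open in the product topology (P([0,1]) with weak topology), and the map μ ↦ μ(U_μ) is continuous. Then either U_μ = ∅ for every μ, or μ(U_μ) = 1 for every μ. -/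
/-!
For open `U`, the map `μ ↦ μ(U_μ \ {y})` is lower semicontinuous (tube lemma and the portmanteau
theorem). Along the segment `t ↦ (1 - t) μ + t ν`, the continuous function `F μ = μ(U_μ)` is this
remainder plus the mass at `y` when `y` lies in the section, so while that mass is positive,
membership of `y` in the section is clopen in `t`; connectedness of `[0, 1]` thus carries
`(μ, y) ∈ U` to `(ν, y) ∈ U` whenever `ν{y} > 0`. From one point `(μ₀, x₀)` of `U` this yields
`(δ_{x₀}, x₀) ∈ U`, and as `F δ_x` is the indicator of `{x | (δ_x, x) ∈ U}`, that set is clopen,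
hence everything. Then every atom of a measure lies in its section, so finitely supported
measures have full sections, and by density and continuity of `F` so do all measures.
-/

open MeasureTheory ENNReal

open Filter Topology Set unitInterval

theorem LowerSemicontinuous.isClosed_setOf_le {α γ : Type*} [TopologicalSpace α] [LinearOrder γ]
    [DenselyOrdered γ] {f g : α → γ} (hf : LowerSemicontinuous f) (hg : UpperSemicontinuous g) :
    IsClosed {x | f x ≤ g x} := by
  refine isOpen_compl_iff.1 (isOpen_iff_mem_nhds.2 fun x hx => ?_)
  obtain ⟨z, hgz, hzf⟩ := exists_between (not_le.1 hx)
  filter_upwards [hf x z hzf, hg x z hgz] with y hfy hgy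
  exact not_le.2 (hgy.trans hfy)

lemma MeasureTheory.measure_eq_one_of_forall_measure_singleton_ne_zero {X : Type*}
    [MeasurableSpace X] {μ : Measure X} [IsProbabilityMeasure μ] {A V : Set X}
    (hA : A.Countable) (hμA : μ Aᶜ = 0) (hV : ∀ y ∈ A, μ {y} ≠ 0 → y ∈ V) : μ V = 1 := by
  have hVc : μ Vᶜ = 0 := by
    refine measure_mono_null (t := Aᶜ ∪ ⋃ y ∈ A ∩ Vᶜ, {y}) (fun x hx => ?_)
      (measure_union_null hμA ((measure_biUnion_null_iff (hA.mono inter_subset_left)).2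
        fun y hy => not_not.1 fun h => hy.2 (hV y hy.1 h)))
    by_cases hxA : x ∈ A
    · exact Or.inr (mem_biUnion ⟨hxA, hx⟩ rfl)
    · exact Or.inl hxA
  rw [measure_congr (ae_eq_univ.2 hVc), measure_univ]

namespace MeasureTheory.ProbabilityMeasure

section LineMap

variable {X : Type*} [MeasurableSpace X]

noncomputable def lineMap (μ ν : ProbabilityMeasure X) (t : I) : ProbabilityMeasure X :=
  ⟨toNNReal (σ t) • (μ : Measure X) + toNNReal t • (ν : Measure X), by
    constructor
    simp [← ENNReal.coe_add]⟩

variable (μ ν : ProbabilityMeasure X)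

lemma lineMap_apply (t : I) (s : Set X) :
    (lineMap μ ν t : Measure X) s
      = toNNReal (σ t) * (μ : Measure X) s + toNNReal t * (ν : Measure X) s :=
  rfl

@[simp] lemma lineMap_zero : lineMap μ ν 0 = μ := by
  ext s : 2
  simp [lineMap_apply]

@[simp] lemma lineMap_one : lineMap μ ν 1 = ν := by
  ext s : 2
  simp [lineMap_apply]

lemma continuous_lineMap_apply (s : Set X) :
    Continuous fun t => (lineMap μ ν t : Measure X) s := by
  simp only [lineMap_apply]
  have := measure_ne_top (μ : Measure X) s
  have := measure_ne_top (ν : Measure X) s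
  fun_prop

lemma continuous_lineMap [TopologicalSpace X] [OpensMeasurableSpace X] :
    Continuous (lineMap μ ν) := by
  refine continuous_iff_continuousAt.2 fun t₀ => ?_
  rw [ContinuousAt, tendsto_iff_forall_integral_tendsto]
  intro g
  have h : ∀ t, ∫ x, g x ∂(lineMap μ ν t : Measure X)
      = σ t * ∫ x, g x ∂(μ : Measure X) + t * ∫ x, g x ∂(ν : Measure X) := fun t => by
    rw [lineMap, coe_mk, integral_add_measure, integral_smul_nnreal_measure,
      integral_smul_nnreal_measure]
    · rfl
    all_goals exact (g.integrable _).smul_measure_nnreal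
  simp only [h]
  exact (by fun_prop : Continuous fun t : I =>
    σ t * ∫ x, g x ∂(μ : Measure X) + t * ∫ x, g x ∂(ν : Measure X)).continuousAt

end LineMap

section Sections

variable {X : Type*} [MeasurableSpace X] [TopologicalSpace X] [OpensMeasurableSpace X]
  [HasOuterApproxClosed X]

lemma lowerSemicontinuous_measure_of_isOpen {G : Set X} (hG : IsOpen G) :
    LowerSemicontinuous fun μ : ProbabilityMeasure X => (μ : Measure X) G :=
  fun _ _ hr =>
    eventually_lt_of_lt_liminf (hr.trans_le (le_liminf_measure_open_of_tendsto tendsto_id hG))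

variable [∀ μ : ProbabilityMeasure X, (μ : Measure X).InnerRegularCompactLTTop]
  {U : Set (ProbabilityMeasure X × X)}

lemma lowerSemicontinuous_measure_section (hU : IsOpen U) :
    LowerSemicontinuous fun μ : ProbabilityMeasure X => (μ : Measure X) {x | (μ, x) ∈ U} := by
  intro μ₀ r hr
  have hsec : IsOpen {x | (μ₀, x) ∈ U} := hU.preimage (Continuous.prodMk_right μ₀)
  obtain ⟨K, hKU, hK, hrK⟩ :=
    hsec.measurableSet.exists_lt_isCompact_of_ne_top (measure_ne_top _ _) hr
  obtain ⟨V, W, hV, hW, hμ₀V, hKW, hVW⟩ := generalized_tube_lemma isCompact_singleton hK hU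
    (by rintro ⟨μ, x⟩ ⟨rfl, hx⟩; exact hKU hx)
  filter_upwards [hV.mem_nhds (hμ₀V rfl),
    lowerSemicontinuous_measure_of_isOpen hW μ₀ r (hrK.trans_le (measure_mono hKW))]
    with μ hμ hrμ
  exact hrμ.trans_le (measure_mono fun x hx => hVW ⟨hμ, hx⟩)

variable [T1Space X]

lemma mem_of_mem_of_measure_singleton_ne_zero (hU : IsOpen U)
    (hF : Continuous fun μ : ProbabilityMeasure X => (μ : Measure X) {x | (μ, x) ∈ U})
    {μ ν : ProbabilityMeasure X} {y : X} (hμ : (μ, y) ∈ U) (hν : (ν : Measure X) {y} ≠ 0) :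
    (ν, y) ∈ U := by
  set p := lineMap μ ν
  have hp : Continuous p := continuous_lineMap μ ν
  set S := {t : I | (p t, y) ∈ U}
  have hS_open : IsOpen S := hU.preimage (hp.prodMk continuous_const)
  have h0 : (0 : I) ∈ S := by simpa [S, p] using hμ
  have hmass : ∀ t ∉ S, (p t : Measure X) {y} ≠ 0 := by
    intro t ht
    have ht0 : toNNReal t ≠ 0 := fun h => ht ((Subtype.ext (congrArg NNReal.toReal h) : t = 0) ▸ h0)
    simp [p, lineMap_apply, ht0, hν]
  set U' := U ∩ Prod.snd ⁻¹' {y}ᶜ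
  have hU' : IsOpen U' := hU.inter (isOpen_compl_singleton.preimage continuous_snd)
  have hS_eq : S = {t | (p t : Measure X) {y} + (p t : Measure X) {x | (p t, x) ∈ U'}
      ≤ (p t : Measure X) {x | (p t, x) ∈ U}} := by
    ext t
    change _ ↔ _ ≤ (_ : ℝ≥0∞)
    rw [← measure_inter_add_sdiff {x | (p t, x) ∈ U} (measurableSet_singleton y)]
    by_cases ht : t ∈ S
    · have hy : y ∈ {x | (p t, x) ∈ U} := ht
      simp only [ht, true_iff]
      rw [inter_eq_right.2 (singleton_subset_iff.2 hy)]
      rfl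
    · have hy : y ∉ {x | (p t, x) ∈ U} := ht
      simp only [ht, false_iff, not_le]
      rw [inter_singleton_eq_empty.2 hy, measure_empty, zero_add, add_comm]
      exact ENNReal.lt_add_right (measure_ne_top _ _) (hmass t ht)
  have hS_closed : IsClosed S := hS_eq ▸ LowerSemicontinuous.isClosed_setOf_le
    ((continuous_lineMap_apply μ ν _).lowerSemicontinuous.add
      ((lowerSemicontinuous_measure_section hU').comp hp))
    (hF.comp hp).upperSemicontinuous
  simpa [S, p] using (IsClopen.eq_univ ⟨hS_closed, hS_open⟩ ⟨0, h0⟩).ge (mem_univ (1 : I))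

lemma diracProba_mem_of_mem [PreconnectedSpace X] (hU : IsOpen U)
    (hF : Continuous fun μ : ProbabilityMeasure X => (μ : Measure X) {x | (μ, x) ∈ U})
    {μ₀ : ProbabilityMeasure X} {x₀ : X} (h₀ : (μ₀, x₀) ∈ U) (x : X) :
    (diracProba x, x) ∈ U := by
  set B := {x | (diracProba x, x) ∈ U}
  have hB_open : IsOpen B := hU.preimage (continuous_diracProba.prodMk continuous_id)
  have hB_eq : B = {x | 1 ≤ (diracProba x : Measure X) {z | (diracProba x, z) ∈ U}} := by
    ext x
    by_cases hx : (diracProba x, x) ∈ U <;> simp [B, diracProba_toMeasure_apply, indicator, hx]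
  have hB_closed : IsClosed B :=
    hB_eq ▸ isClosed_le continuous_const (hF.comp continuous_diracProba)
  have hx₀ : x₀ ∈ B := mem_of_mem_of_measure_singleton_ne_zero hU hF h₀ (by simp)
  exact (IsClopen.eq_univ ⟨hB_closed, hB_open⟩ ⟨x₀, hx₀⟩).ge (mem_univ x)

end Sections

lemma dense_setOf_finite_support {X : Type*} [EMetricSpace X]
    [TopologicalSpace.SeparableSpace X] [MeasurableSpace X] [OpensMeasurableSpace X] :
    Dense {ν : ProbabilityMeasure X | ∃ A : Set X, A.Finite ∧ (ν : Measure X) Aᶜ = 0} := by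
  intro μ
  have : Nonempty X := nonempty_of_isProbabilityMeasure (μ : Measure X)
  let g := SimpleFunc.approxOn id measurable_id univ (Classical.arbitrary X) trivial
  have hg : TendstoInDistribution (fun n => g n) atTop id (fun _ => (μ : Measure X)) μ :=
    tendstoInDistribution_of_ae_tendsto (fun n => (g n).measurable.aemeasurable)
      aemeasurable_id (ae_of_all _ fun x =>
        SimpleFunc.tendsto_approxOn measurable_id (mem_univ _) (subset_closure (mem_univ x)))
  have hlim := hg.tendsto
  simp only [Measure.map_id] at hlim
  refine mem_closure_of_tendsto hlim (Eventually.of_forall fun n =>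
    ⟨range (g n), (g n).finite_range, ?_⟩)
  rw [coe_mk, Measure.map_apply (g n).measurable
    (g n).finite_range.measurableSet.compl, preimage_compl, preimage_range, compl_univ,
    measure_empty]

theorem forall_section_eq_empty_or_forall_measure_section_eq_one
    {X : Type*} [EMetricSpace X] [CompleteSpace X] [SecondCountableTopology X] [ConnectedSpace X]
    [MeasurableSpace X] [BorelSpace X] {U : Set (ProbabilityMeasure X × X)} (hU : IsOpen U)
    (hF : Continuous fun μ : ProbabilityMeasure X => (μ : Measure X) {x | (μ, x) ∈ U}) :
    (∀ μ : ProbabilityMeasure X, {x | (μ, x) ∈ U} = ∅) ∨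
    (∀ μ : ProbabilityMeasure X, (μ : Measure X) {x | (μ, x) ∈ U} = 1) := by
  refine or_iff_not_imp_left.2 fun hne => ?_
  push Not at hne
  obtain ⟨μ₀, x₀, h₀⟩ := hne
  have hfull : {ν : ProbabilityMeasure X | ∃ A : Set X, A.Finite ∧ (ν : Measure X) Aᶜ = 0}
      ⊆ {ν | (ν : Measure X) {x | (ν, x) ∈ U} = 1} := fun ν ⟨A, hA, hνA⟩ =>
    measure_eq_one_of_forall_measure_singleton_ne_zero hA.countable hνA fun y _ hy =>
      mem_of_mem_of_measure_singleton_ne_zero hU hF (diracProba_mem_of_mem hU hF h₀ y) hy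
  exact fun μ => closure_minimal hfull (isClosed_eq hF continuous_const)
    (dense_setOf_finite_support μ)

end MeasureTheory.ProbabilityMeasure

theorem stmt_14_general (U : Set (ProbabilityMeasure unitInterval × unitInterval))
    (hU_open : IsOpen U)
    (h_cont : Continuous
      (fun μ : ProbabilityMeasure unitInterval => (μ : Measure unitInterval) {x | (μ, x) ∈ U})) :
    (∀ μ : ProbabilityMeasure unitInterval, {x | (μ, x) ∈ U} = ∅) ∨
    (∀ μ : ProbabilityMeasure unitInterval, (μ : Measure unitInterval) {x | (μ, x) ∈ U} = 1) :=
  ProbabilityMeasure.forall_section_eq_empty_or_forall_measure_section_eq_one hU_open h_cont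

/-- there are no non-trivial uniform Schnorr sequential tests on `[0,1]`:
an open set `U ⊆ P([0,1]) × [0,1]` whose sectionwise measure varies continuously has
either all sections empty or all sections of full measure. -/
theorem stmt_14 (U : Set (ProbabilityMeasure unitInterval × unitInterval))
    (hU_open : IsOpen U)
    (hU_sec : ∀ μ : ProbabilityMeasure unitInterval, IsOpen {x | (μ, x) ∈ U})
    (h_cont : Continuous
      (fun μ : ProbabilityMeasure unitInterval => (μ : Measure unitInterval) {x | (μ, x) ∈ U})) :
    (∀ μ : ProbabilityMeasure unitInterval, {x | (μ, x) ∈ U} = ∅) ∨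
    (∀ μ : ProbabilityMeasure unitInterval, (μ : Measure unitInterval) {x | (μ, x) ∈ U} = 1) :=
  stmt_14_general U hU_open h_cont
end
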